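/- For every v ∈ C¹([0,1]), one has |v(1)| ≤ 2‖v‖₁, where ‖v‖₁² = ∫₀¹ x²v(x)² dx + ∫₀¹ x²v'(x)² dx. -/

import Mathlib

open MeasureTheory Set

/-! Since `(x³ v²)' = 3x² v² + 2x³ v v'` and `x³ v²` vanishes at `0`,
`v(1)² = ∫₀¹ (3x² v² + 2x³ v v')`. By AM-GM, `2x³ v v' ≤ x² v² + x⁴ v'² ≤ x² v² + x² v'²`
on `[0, 1]`, so the integrand is at most `4 (x² v² + x² v'²)`, whence `v(1)² ≤ 4‖v‖₁²`. -/

theorem integral_deriv_cube_mul_sq {v u : ℝ → ℝ} {a b : ℝ} (hab : a ≤ b)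
    (hv : ∀ x ∈ Icc a b, HasDerivWithinAt v (u x) (Icc a b) x) (hu : ContinuousOn u (Icc a b)) :
    ∫ x in a..b, (3 * x ^ 2 * v x ^ 2 + 2 * x ^ 3 * v x * u x) =
      b ^ 3 * v b ^ 2 - a ^ 3 * v a ^ 2 := by
  have hvc : ContinuousOn v (Icc a b) := fun x hx => (hv x hx).continuousWithinAt
  refine intervalIntegral.integral_eq_sub_of_hasDeriv_right_of_le
    (f := fun x => x ^ 3 * v x ^ 2) hab (by fun_prop) (fun x hx => ?_)
    ((by fun_prop : ContinuousOn _ _).intervalIntegrable_of_Icc hab)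
  have hvx : HasDerivAt v (u x) x :=
    (hv x (Ioo_subset_Icc_self hx)).hasDerivAt (Icc_mem_nhds hx.1 hx.2)
  refine (((hasDerivAt_pow 3 x).mul (hvx.pow 2)).congr_deriv ?_).hasDerivWithinAt
  simp only [Pi.pow_apply]
  push_cast
  ring

theorem three_mul_sq_mul_sq_add_two_mul_cube_le {x a b : ℝ} (hx : x ∈ Icc (0 : ℝ) 1) :
    3 * x ^ 2 * a ^ 2 + 2 * x ^ 3 * a * b ≤ 4 * (x ^ 2 * a ^ 2 + x ^ 2 * b ^ 2) := by
  have hx4 : x ^ 4 * b ^ 2 ≤ x ^ 2 * b ^ 2 := by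
    have : x ^ 2 ≤ 1 := pow_le_one₀ hx.1 hx.2
    nlinarith [mul_nonneg (mul_nonneg (sq_nonneg x) (sq_nonneg b)) (sub_nonneg.2 this)]
  nlinarith [sq_nonneg (x * a - x ^ 2 * b), sq_nonneg (x * b)]

theorem sq_le_four_mul_integral_sq_mul_sq_add {v u : ℝ → ℝ}
    (hv : ∀ x ∈ Icc (0 : ℝ) 1, HasDerivWithinAt v (u x) (Icc 0 1) x)
    (hu : ContinuousOn u (Icc 0 1)) :
    v 1 ^ 2 ≤
      4 * ((∫ x in (0 : ℝ)..1, x ^ 2 * v x ^ 2) + ∫ x in (0 : ℝ)..1, x ^ 2 * u x ^ 2) := by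
  have hvc : ContinuousOn v (Icc 0 1) := fun x hx => (hv x hx).continuousWithinAt
  have hint {f : ℝ → ℝ} (hf : ContinuousOn f (Icc 0 1)) : IntervalIntegrable f volume 0 1 :=
    hf.intervalIntegrable_of_Icc zero_le_one
  calc v 1 ^ 2 = ∫ x in (0 : ℝ)..1, (3 * x ^ 2 * v x ^ 2 + 2 * x ^ 3 * v x * u x) := by
        rw [integral_deriv_cube_mul_sq zero_le_one hv hu]; ring
    _ ≤ ∫ x in (0 : ℝ)..1, 4 * (x ^ 2 * v x ^ 2 + x ^ 2 * u x ^ 2) :=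
        intervalIntegral.integral_mono_on zero_le_one (hint (by fun_prop)) (hint (by fun_prop))
          fun x hx => three_mul_sq_mul_sq_add_two_mul_cube_le hx
    _ = _ := by
        rw [intervalIntegral.integral_const_mul,
          intervalIntegral.integral_add (hint (by fun_prop)) (hint (by fun_prop))]

/-- Lemma 1, third inequality: for `v ∈ C¹([0,1])`, `|v(1)| ≤ 2‖v‖₁`, where
`‖v‖₁² = ∫₀¹ x² v(x)² dx + ∫₀¹ x² v'(x)² dx`. -/
theorem trace_bound_V_norm (v : ℝ → ℝ) (hv : ContDiffOn ℝ 1 v (Set.Icc 0 1)) :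
    |v 1| ≤ 2 * Real.sqrt ((∫ x in (0:ℝ)..1, x ^ 2 * (v x) ^ 2)
      + ∫ x in (0:ℝ)..1, x ^ 2 * (derivWithin v (Set.Icc 0 1) x) ^ 2) := by
  have hderiv :
      ∀ x ∈ Icc (0 : ℝ) 1, HasDerivWithinAt v (derivWithin v (Icc 0 1) x) (Icc 0 1) x :=
    fun x hx => (hv.differentiableOn one_ne_zero x hx).hasDerivWithinAt
  have hcont : ContinuousOn (derivWithin v (Icc 0 1)) (Icc 0 1) :=
    hv.continuousOn_derivWithin (uniqueDiffOn_Icc one_pos) le_rfl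
  calc |v 1| ≤ Real.sqrt (2 ^ 2 * ((∫ x in (0:ℝ)..1, x ^ 2 * (v x) ^ 2)
        + ∫ x in (0:ℝ)..1, x ^ 2 * (derivWithin v (Set.Icc 0 1) x) ^ 2)) :=
        Real.abs_le_sqrt <| by
          rw [show (2 : ℝ) ^ 2 = 4 by norm_num]
          exact sq_le_four_mul_integral_sq_mul_sq_add hderiv hcont
    _ = _ := by rw [Real.sqrt_mul (by positivity), Real.sqrt_sq zero_le_two]
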